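/- arXiv:2408.09334 — 4 statements merged into one kernel-verified Lean document; each statement's English description precedes it below -/
import Mathlib

section
/- Let q = p^m with p prime and let 0 ≤ s < m. Let C be an [n,k,d]_q linear code over F_q with dim_{F_q} Hull_s(C) = h. Then there exists an s-Galois LCD linear code D ⊆ F_q^n of dimension k − h whose minimum Hamming weight is at least d; moreover D can be taken to be a subcode of C with C = Hull_s(C) ⊕ D. -/
open Finset Matrix

noncomputable section

/-- The Hamming weight of a vector: the number of nonzero coordinates. -/
def hwt {G : Type*} [Zero G] {κ : Type*} (x : κ → G) : ℕ := Set.ncard {i | x i ≠ 0}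

/-- The linear code `C` has minimum Hamming weight `d`. -/
def minHWt {F : Type*} [Field F] {κ : Type*} (C : Submodule F (κ → F)) (d : ℕ) : Prop :=
  (∃ c ∈ C, c ≠ 0 ∧ hwt c = d) ∧ ∀ c ∈ C, c ≠ 0 → d ≤ hwt c

/-- The minimum Hamming weight (minimum distance) of a linear code. -/
def minDist {F : Type*} [Field F] {κ : Type*} (C : Submodule F (κ → F)) : ℕ :=
  sInf (hwt '' {c | c ∈ C ∧ c ≠ 0})

/-- The Euclidean dual of a linear code. -/
def euclDual {F : Type*} [Field F] {ι : Type*} [Fintype ι] (C : Submodule F (ι → F)) :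
    Submodule F (ι → F) where
  carrier := {x | ∀ c ∈ C, ∑ i, c i * x i = 0}
  add_mem' := by
    intro a b ha hb c hc
    simp only [Set.mem_setOf_eq] at *
    simp [Pi.add_apply, mul_add, Finset.sum_add_distrib, ha c hc, hb c hc]
  zero_mem' := by intro c hc; simp
  smul_mem' := by
    intro r a ha c hc
    simp only [Set.mem_setOf_eq] at *
    simp [Pi.smul_apply, smul_eq_mul, mul_left_comm, ← Finset.mul_sum, ha c hc]

/-- The `s`-Galois dual of a linear code over a field of characteristic `p`:
`{x | ∀ c ∈ C, ∑ i, c i * (x i)^(p^s) = 0}`. -/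
def sGaloisDual {F : Type*} [Field F] {ι : Type*} [Fintype ι]
    (p s : ℕ) [Fact p.Prime] [CharP F p] (C : Submodule F (ι → F)) :
    Submodule F (ι → F) where
  carrier := {x | ∀ c ∈ C, ∑ i, c i * x i ^ p ^ s = 0}
  add_mem' := by
    intro a b ha hb c hc
    simp only [Set.mem_setOf_eq] at *
    have h : ∀ i, ((a + b) i) ^ p ^ s = a i ^ p ^ s + b i ^ p ^ s := fun i => by
      simpa using add_pow_char_pow (a i) (b i) p s
    calc ∑ i, c i * ((a + b) i) ^ p ^ s
        = ∑ i, (c i * a i ^ p ^ s + c i * b i ^ p ^ s) :=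
          Finset.sum_congr rfl fun i _ => by rw [h i, mul_add]
      _ = 0 := by rw [Finset.sum_add_distrib, ha c hc, hb c hc, add_zero]
  zero_mem' := by
    intro c hc
    have hps : p ^ s ≠ 0 := pow_ne_zero _ (Nat.Prime.ne_zero Fact.out)
    simp [zero_pow hps]
  smul_mem' := by
    intro r a ha c hc
    simp only [Set.mem_setOf_eq] at *
    have h : ∀ i, ((r • a) i) ^ p ^ s = r ^ p ^ s * a i ^ p ^ s := fun i => by
      simp [mul_pow]
    calc ∑ i, c i * ((r • a) i) ^ p ^ s
        = ∑ i, r ^ p ^ s * (c i * a i ^ p ^ s) :=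
          Finset.sum_congr rfl fun i _ => by rw [h i]; ring
      _ = 0 := by rw [← Finset.mul_sum, ha c hc, mul_zero]

/-- The `s`-Galois hull of a linear code: `Hull_s(C) = C ∩ C^{⊥_s}`. -/
def sGaloisHull {F : Type*} [Field F] {ι : Type*} [Fintype ι]
    (p s : ℕ) [Fact p.Prime] [CharP F p] (C : Submodule F (ι → F)) :
    Submodule F (ι → F) :=
  C ⊓ sGaloisDual p s C

/-- The matrix-product code `[C_1, …, C_l] A ⊆ F^{t·n}`: codewords are indexed by
`Fin t × Fin n`, with block `j` equal to `∑ u, A u j • c u` for codewords `c u ∈ C u`. -/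
def matrixProductCode {F : Type*} [Field F] {n l t : ℕ}
    (C : Fin l → Submodule F (Fin n → F)) (A : Matrix (Fin l) (Fin t) F) :
    Submodule F (Fin t × Fin n → F) where
  carrier := {x | ∃ c : Fin l → Fin n → F, (∀ u, c u ∈ C u) ∧
      ∀ j i, x (j, i) = ∑ u, A u j * c u i}
  add_mem' := by
    rintro x y ⟨c, hc, hx⟩ ⟨c', hc', hy⟩
    exact ⟨c + c', fun u => (C u).add_mem (hc u) (hc' u), fun j i => by
      simp [hx j i, hy j i, mul_add, Finset.sum_add_distrib]⟩
  zero_mem' := ⟨0, fun u => (C u).zero_mem, fun j i => by simp⟩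
  smul_mem' := by
    rintro r x ⟨c, hc, hx⟩
    refine ⟨r • c, fun u => (C u).smul_mem r (hc u), fun j i => ?_⟩
    simp only [Pi.smul_apply, smul_eq_mul, hx j i, Finset.mul_sum]
    exact Finset.sum_congr rfl fun u _ => by ring

/-- `UA A i` : the code in `F^t` spanned by the first `i` rows of the matrix `A`. -/
def UA {F : Type*} [Field F] {l t : ℕ} (A : Matrix (Fin l) (Fin t) F) (i : ℕ) :
    Submodule F (Fin t → F) :=
  Submodule.span F ((fun u : Fin l => A u) '' {u | (u : ℕ) < i})

/-- The Gabidulin code of dimension `k` associated to `g : Fin m → K`, over a field `K`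
containing a subfield with `q` elements: the row span of the matrix `(g j ^ q ^ i)`. -/
def gabidulin {K : Type*} [Field K] (q : ℕ) {m : ℕ} (k : ℕ) (g : Fin m → K) :
    Submodule K (Fin m → K) :=
  Submodule.span K (Set.range fun i : Fin k => fun j => g j ^ q ^ (i : ℕ))

/-!
The hull `R = Hull_s(C)` is the right radical of the `s`-Galois form restricted to `C`. The left
radical `L = {x ∈ C | [x, c]_s = 0 for all c ∈ C}` has the same dimension: after applying the
coordinatewise Frobenius `y ↦ y^(p^s)`, the two become the left and right kernels of the dot
product pairing between `C` and its Frobenius image, which have equal dimension. Any common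
complement `D` of `L` and `R` in `C` is `s`-Galois LCD: a `y ∈ D` that is `s`-orthogonal to `D` is
also orthogonal to `L`, hence to `C = L ⊕ D`, so `y ∈ R ∩ D = 0`.
-/

open Module Submodule

section CommonComplement

variable {K V : Type*} [DivisionRing K] [AddCommGroup V] [Module K V]

theorem exists_mem_notMem_of_lt_of_lt {C U W : Submodule K V} (hU : U < C) (hW : W < C) :
    ∃ x ∈ C, x ∉ U ∧ x ∉ W := by
  obtain ⟨a, haC, haU⟩ := SetLike.exists_of_lt hU
  obtain ⟨b, hbC, hbW⟩ := SetLike.exists_of_lt hW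
  by_cases haW : a ∈ W
  · by_cases hbU : b ∈ U
    · refine ⟨a + b, C.add_mem haC hbC, fun h => haU ?_, fun h => hbW ?_⟩
      · simpa using U.sub_mem h hbU
      · simpa using W.sub_mem h haW
    · exact ⟨b, hbC, hbU, hbW⟩
  · exact ⟨a, haC, haU, haW⟩

theorem exists_common_compl_of_finrank_eq [FiniteDimensional K V] {C U W : Submodule K V}
    (hU : U ≤ C) (hW : W ≤ C) (h : finrank K U = finrank K W) :
    ∃ D ≤ C, Disjoint U D ∧ U ⊔ D = C ∧ Disjoint W D ∧ W ⊔ D = C := by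
  by_cases hUC : U = C
  · have hWC : W = C := eq_of_le_of_finrank_eq hW (hUC ▸ h.symm)
    exact ⟨⊥, bot_le, by simp [hUC, hWC]⟩
  have hWC : W ≠ C := fun hWC => hUC (eq_of_le_of_finrank_eq hU (hWC ▸ h))
  obtain ⟨x, hxC, hxU, hxW⟩ :=
    exists_mem_notMem_of_lt_of_lt (hU.lt_of_ne hUC) (hW.lt_of_ne hWC)
  have hxC' : K ∙ x ≤ C := (span_singleton_le_iff_mem x C).2 hxC
  obtain ⟨D, hDC, hUD, hUDC, hWD, hWDC⟩ := exists_common_compl_of_finrank_eq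
    (sup_le hU hxC') (sup_le hW hxC')
    (by rw [finrank_sup_span_singleton hxU, finrank_sup_span_singleton hxW, h])
  refine ⟨K ∙ x ⊔ D, sup_le hxC' hDC, ?_, by rwa [← sup_assoc], ?_, by rwa [← sup_assoc]⟩
  · exact (disjoint_span_singleton_of_notMem hxU).disjoint_sup_right_of_disjoint_sup_left hUD
  · exact (disjoint_span_singleton_of_notMem hxW).disjoint_sup_right_of_disjoint_sup_left hWD
termination_by finrank K C - finrank K U
decreasing_by
  have := finrank_sup_span_singleton hxU
  have := Submodule.finrank_mono (sup_le hU hxC')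
  omega

end CommonComplement

theorem LinearMap.finrank_ker_eq_finrank_ker_flip {K V₁ V₂ : Type*} [Field K]
    [AddCommGroup V₁] [Module K V₁] [AddCommGroup V₂] [Module K V₂]
    [FiniteDimensional K V₁] [FiniteDimensional K V₂]
    (B : V₁ →ₗ[K] V₂ →ₗ[K] K) (h : finrank K V₁ = finrank K V₂) :
    finrank K (ker B) = finrank K (ker B.flip) := by
  have hB := Subspace.finrank_add_finrank_dualAnnihilator_eq (LinearMap.ker B)
  have hflip := LinearMap.finrank_range_add_finrank_ker B.flip
  have hann : finrank K (LinearMap.ker B).dualAnnihilator = finrank K (LinearMap.range B.flip) :=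
    by rw [LinearMap.dualAnnihilator_ker_eq_range_flip]
  omega

section EuclideanDual

variable {K ι : Type*} [Field K] [Fintype ι]

theorem mem_euclDual {C : Submodule K (ι → K)} {x : ι → K} :
    x ∈ euclDual C ↔ ∀ c ∈ C, c ⬝ᵥ x = 0 := Iff.rfl

theorem le_euclDual_comm {A B : Submodule K (ι → K)} : A ≤ euclDual B ↔ B ≤ euclDual A :=
  ⟨fun h b hb => mem_euclDual.2 fun a ha => dotProduct_comm a b ▸ mem_euclDual.1 (h ha) b hb,
    fun h a ha => mem_euclDual.2 fun b hb => dotProduct_comm b a ▸ mem_euclDual.1 (h hb) a ha⟩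

theorem euclDual_sup (A B : Submodule K (ι → K)) :
    euclDual (A ⊔ B) = euclDual A ⊓ euclDual B := by
  ext x
  refine ⟨fun hx => ⟨fun a ha => hx a (mem_sup_left ha), fun b hb => hx b (mem_sup_right hb)⟩,
    fun hx c hc => ?_⟩
  obtain ⟨hA, hB⟩ := mem_inf.1 hx
  obtain ⟨a, ha, b, hb, rfl⟩ := mem_sup.1 hc
  change (a + b) ⬝ᵥ x = 0
  rw [add_dotProduct, mem_euclDual.1 hA a ha, mem_euclDual.1 hB b hb, add_zero]

theorem inf_euclDual_eq_map_ker (A B : Submodule K (ι → K)) :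
    A ⊓ euclDual B = (LinearMap.ker ((dotProductBilin K K).domRestrict₁₂ A B)).map A.subtype := by
  ext x
  simp [mem_euclDual, LinearMap.ext_iff, dotProduct_comm, LinearMap.domRestrict₁₂_apply, and_comm]

theorem finrank_inf_euclDual_comm {A B : Submodule K (ι → K)}
    (h : finrank K A = finrank K B) :
    finrank K ↥(A ⊓ euclDual B) = finrank K ↥(B ⊓ euclDual A) := by
  have hflip : ((dotProductBilin K K).domRestrict₁₂ A B).flip =
      (dotProductBilin K K).domRestrict₁₂ B A := by
    ext x y
    exact dotProduct_comm _ _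
  rw [inf_euclDual_eq_map_ker, inf_euclDual_eq_map_ker, finrank_map_subtype_eq,
    finrank_map_subtype_eq, LinearMap.finrank_ker_eq_finrank_ker_flip _ h, hflip]

end EuclideanDual

section GaloisDual

variable {F ι : Type*} [Field F] (p s : ℕ) [Fact p.Prime] [CharP F p]

theorem sGaloisHull_le [Fintype ι] (C : Submodule F (ι → F)) : sGaloisHull p s C ≤ C :=
  inf_le_left

variable [PerfectRing F p]

instance : RingHomInvPair (iterateFrobeniusEquiv F p s : F →+* F)
    (iterateFrobeniusEquiv F p s).symm :=
  .of_ringEquiv _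

instance : RingHomInvPair ((iterateFrobeniusEquiv F p s).symm : F →+* F)
    (iterateFrobeniusEquiv F p s) :=
  .of_ringEquiv_symm _

/-- `[x, y]_s = x ⬝ᵥ frobeniusPi p s y`. -/
def frobeniusPi : (ι → F) →ₛₗ[(iterateFrobeniusEquiv F p s : F →+* F)] (ι → F) where
  toFun x i := x i ^ p ^ s
  map_add' x y := funext fun i => add_pow_expChar_pow (x i) (y i) p s
  map_smul' r x := funext fun i => mul_pow r (x i) _

theorem frobeniusPi_bijective : Function.Bijective (frobeniusPi (F := F) (ι := ι) p s) :=
  (iterateFrobeniusEquiv F p s).bijective.comp_left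

theorem finrank_map_frobeniusPi (A : Submodule F (ι → F)) :
    finrank F (A.map (frobeniusPi p s)) = finrank F A := by
  let e := equivMapOfInjective _ (frobeniusPi_bijective p s).1 A
  have := rank_eq_of_equiv_equiv _ e.toAddEquiv (iterateFrobeniusEquiv F p s).bijective
    (map_smulₛₗ e)
  exact congrArg Cardinal.toNat this.symm

variable [Fintype ι]

/-- The left radical `{x ∈ C | [x, c]_s = 0 for all c ∈ C}` of the `s`-Galois form on `C`. -/
def sGaloisLeftHull (C : Submodule F (ι → F)) : Submodule F (ι → F) :=
  C ⊓ euclDual (C.map (frobeniusPi p s))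

theorem mem_sGaloisDual_iff {C : Submodule F (ι → F)} {x : ι → F} :
    x ∈ sGaloisDual p s C ↔ frobeniusPi p s x ∈ euclDual C := Iff.rfl

theorem sGaloisDual_eq_comap (C : Submodule F (ι → F)) :
    sGaloisDual p s C = (euclDual C).comap (frobeniusPi p s) := rfl

theorem map_frobeniusPi_sGaloisHull (C : Submodule F (ι → F)) :
    (sGaloisHull p s C).map (frobeniusPi p s) = C.map (frobeniusPi p s) ⊓ euclDual C := by
  rw [sGaloisHull, Submodule.map_inf _ (frobeniusPi_bijective p s).1, sGaloisDual_eq_comap,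
    map_comap_eq_of_surjective (frobeniusPi_bijective p s).2]

theorem finrank_sGaloisHull_eq_finrank_sGaloisLeftHull (C : Submodule F (ι → F)) :
    finrank F (sGaloisHull p s C) = finrank F (sGaloisLeftHull p s C) := by
  rw [← finrank_map_frobeniusPi, map_frobeniusPi_sGaloisHull,
    finrank_inf_euclDual_comm (finrank_map_frobeniusPi p s C), sGaloisLeftHull]

theorem inf_sGaloisDual_eq_bot_of_sup_eq {C D : Submodule F (ι → F)} (hDC : D ≤ C)
    (hleft : sGaloisLeftHull p s C ⊔ D = C)
    (hhull : sGaloisHull p s C ⊓ D = ⊥) : D ⊓ sGaloisDual p s D = ⊥ := by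
  refine eq_bot_iff.2 fun y hy => ?_
  obtain ⟨hyD, hyD'⟩ := mem_inf.1 hy
  have hyL : frobeniusPi p s y ∈ euclDual (sGaloisLeftHull p s C) :=
    le_euclDual_comm.1 inf_le_right (mem_map_of_mem (hDC hyD))
  have hyC : y ∈ sGaloisDual p s C := by
    rw [mem_sGaloisDual_iff, ← hleft, euclDual_sup]
    exact mem_inf.2 ⟨hyL, hyD'⟩
  rw [← hhull]
  exact mem_inf.2 ⟨mem_inf.2 ⟨hDC hyD, hyC⟩, hyD⟩

end GaloisDual

theorem exists_galois_lcd_subcode_general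
    {p s : ℕ} [Fact p.Prime]
    {F : Type*} [Field F] [Fintype F] [CharP F p]
    {n k d h : ℕ} (C : Submodule F (Fin n → F))
    (hk : Module.finrank F C = k) (hd : minHWt C d)
    (hh : Module.finrank F (sGaloisHull p s C) = h) :
    ∃ D : Submodule F (Fin n → F),
      D ≤ C ∧
      Module.finrank F D = k - h ∧
      (∀ c ∈ D, c ≠ 0 → d ≤ hwt c) ∧
      D ⊓ sGaloisDual p s D = ⊥ ∧
      sGaloisHull p s C ⊔ D = C ∧
      sGaloisHull p s C ⊓ D = ⊥ := by
  obtain ⟨D, hDC, hRD, hRDC, -, hLDC⟩ := exists_common_compl_of_finrank_eq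
    (sGaloisHull_le p s C) inf_le_left (finrank_sGaloisHull_eq_finrank_sGaloisLeftHull p s C)
  have hdim := finrank_sup_add_finrank_inf_eq (sGaloisHull p s C) D
  rw [hRDC, hRD.eq_bot, finrank_bot, hk, hh] at hdim
  exact ⟨D, hDC, by omega, fun c hc => hd.2 c (hDC hc),
    inf_sGaloisDual_eq_bot_of_sup_eq p s hDC hLDC hRD.eq_bot, hRDC, hRD.eq_bot⟩

/-- If `dim Hull_s(C) = h` then there is an `s`-Galois LCD subcode `D ≤ C`
of dimension `k - h`, minimum weight at least `d`, with `C = Hull_s(C) ⊕ D`. -/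
theorem exists_galois_lcd_subcode
    {p m s : ℕ} [Fact p.Prime] (hs : s < m)
    {F : Type*} [Field F] [Fintype F] [CharP F p] (hcard : Fintype.card F = p ^ m)
    {n k d h : ℕ} (C : Submodule F (Fin n → F))
    (hk : Module.finrank F C = k) (hd : minHWt C d)
    (hh : Module.finrank F (sGaloisHull p s C) = h) :
    ∃ D : Submodule F (Fin n → F),
      D ≤ C ∧
      Module.finrank F D = k - h ∧
      (∀ c ∈ D, c ≠ 0 → d ≤ hwt c) ∧
      D ⊓ sGaloisDual p s D = ⊥ ∧
      sGaloisHull p s C ⊔ D = C ∧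
      sGaloisHull p s C ⊓ D = ⊥ :=
  exists_galois_lcd_subcode_general C hk hd hh

end
end

section
/- Let A be a nonsingular l×l matrix over F_q and let C_1,…,C_l ⊆ F_q^n be linear codes with Euclidean dual codes C_i^⊥ all nonzero, and let d_i^⊥ denote the minimum Hamming weight of C_i^⊥. Then the Euclidean dual C^⊥ of the matrix-product code C = [C_1,…,C_l]A satisfies d(C^⊥) ≥ min{ d_1^⊥·d(U_{(A^{-1})^T}(1)), d_2^⊥·d(U_{(A^{-1})^T}(2)), …, d_l^⊥·d(U_{(A^{-1})^T}(l)) }, where U_B(i) denotes the linear code in F_q^l spanned by the first i rows of the matrix B and d(U_B(i)) its minimum Hamming weight. -/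
open Finset Matrix

noncomputable section

/-! A codeword `x` of `C^⊥` is read as the `l × n` matrix `X` of its blocks. The blocks of
`A * X` lie in the duals `C_u^⊥`; if `r` is the last nonzero one, every column of
`X = A⁻¹ * (A * X)` lies in `U_{(A⁻¹)ᵀ}(r + 1)`, and it is nonzero wherever row `r` of `A * X` is.
So at least `d_r^⊥` columns of `X` each carry at least `d(U_{(A⁻¹)ᵀ}(r + 1))` nonzero entries. -/

lemma hwt_eq_card_filter {G κ : Type*} [Zero G] [Fintype κ] (x : κ → G)
    [DecidablePred fun i => x i ≠ 0] :
    hwt x = #{i | x i ≠ 0} := by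
  rw [hwt, ← Set.ncard_coe_finset]
  congr 1
  ext i
  simp

lemma hwt_eq_sum_hwt_col {G ι κ : Type*} [Zero G] [Fintype ι] [Fintype κ] (x : ι × κ → G) :
    hwt x = ∑ i, hwt fun j => x (j, i) := by
  classical
  simp only [hwt_eq_card_filter, card_filter, Fintype.sum_prod_type]
  exact Finset.sum_comm

lemma minDist_le_hwt {F κ : Type*} [Field F] {C : Submodule F (κ → F)} {c : κ → F}
    (hc : c ∈ C) (hc0 : c ≠ 0) : minDist C ≤ hwt c :=
  Nat.sInf_le ⟨c, ⟨hc, hc0⟩, rfl⟩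

lemma vecMul_mem_UA {F : Type*} [Field F] {l t : ℕ} (A : Matrix (Fin l) (Fin t) F) {i : ℕ}
    {c : Fin l → F} (hc : ∀ u : Fin l, i ≤ u → c u = 0) : c ᵥ* A ∈ UA A i := by
  rw [vecMul_eq_sum]
  refine Submodule.sum_mem _ fun u _ => ?_
  by_cases hu : (u : ℕ) < i
  · exact Submodule.smul_mem _ _ (Submodule.subset_span ⟨u, hu, rfl⟩)
  · simp [hc u (not_lt.mp hu)]

lemma mul_row_mem_euclDual_of_mem_euclDual_matrixProductCode {F : Type*} [Field F] {n l t : ℕ}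
    {C : Fin l → Submodule F (Fin n → F)} {A : Matrix (Fin l) (Fin t) F}
    {x : Fin t × Fin n → F} (hx : x ∈ euclDual (matrixProductCode C A)) (u : Fin l) :
    (A * Matrix.of (Function.curry x)) u ∈ euclDual (C u) := by
  intro c hc
  have hy : (fun p : Fin t × Fin n => A u p.1 * c p.2) ∈ matrixProductCode C A := by
    refine ⟨Pi.single u c, fun v => ?_, fun j i => ?_⟩
    · rcases eq_or_ne v u with rfl | hvu
      · simpa using hc
      · simp [hvu]
    · simp [Pi.single_apply, ite_apply, mul_ite]
  calc ∑ i, c i * (A * Matrix.of (Function.curry x)) u i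
      = ∑ p : Fin t × Fin n, A u p.1 * c p.2 * x p := by
        simp only [mul_apply, of_apply, Function.curry_apply, Finset.mul_sum,
          Fintype.sum_prod_type]
        rw [Finset.sum_comm]
        exact Finset.sum_congr rfl fun j _ => Finset.sum_congr rfl fun i _ => by ring
    _ = 0 := hx _ hy

lemma exists_ne_zero_forall_gt_eq_zero {ι M : Type*} [LinearOrder ι] [Fintype ι] [Zero M]
    {f : ι → M} (hf : f ≠ 0) : ∃ r, f r ≠ 0 ∧ ∀ u, r < u → f u = 0 := by
  classical
  obtain ⟨u₀, hu₀⟩ := Function.ne_iff.mp hf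
  obtain ⟨r, hr, hmax⟩ := Finset.exists_max_image {u | f u ≠ 0} id ⟨u₀, by simpa using hu₀⟩
  refine ⟨r, (Finset.mem_filter.mp hr).2, fun u hu => ?_⟩
  by_contra hfu
  exact (hmax u (by simpa using hfu)).not_gt hu

lemma hwt_row_mul_minDist_le_sum_hwt_col {F : Type*} [Field F] {n l : ℕ}
    {A : Matrix (Fin l) (Fin l) F} (hA : IsUnit A) (X : Matrix (Fin l) (Fin n) F) {r : Fin l}
    (hlast : ∀ u, r < u → (A * X) u = 0) :
    hwt ((A * X) r) * minDist (UA (A⁻¹)ᵀ ((r : ℕ) + 1)) ≤ ∑ i, hwt (Xᵀ i) := by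
  classical
  set m := minDist (UA (A⁻¹)ᵀ ((r : ℕ) + 1))
  have hinv : A⁻¹ * (A * X) = X :=
    nonsing_inv_mul_cancel_left A X ((isUnit_iff_isUnit_det A).mp hA)
  have hcol : ∀ i, Xᵀ i = (A * X)ᵀ i ᵥ* (A⁻¹)ᵀ := fun i => by
    rw [← mul_apply_eq_vecMul, ← transpose_mul, hinv]
  have hmem : ∀ i, Xᵀ i ∈ UA (A⁻¹)ᵀ ((r : ℕ) + 1) := fun i => by
    rw [hcol]
    refine vecMul_mem_UA _ fun u hu => ?_
    simp [hlast u (Fin.lt_def.mpr hu)]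
  have hne : ∀ i, (A * X) r i ≠ 0 → Xᵀ i ≠ 0 := fun i hi hXi => hi <| by
    simpa [mul_apply, dotProduct] using congrArg (A r ⬝ᵥ ·) hXi
  calc hwt ((A * X) r) * m = ∑ i with (A * X) r i ≠ 0, m := by
        rw [sum_const, smul_eq_mul, hwt_eq_card_filter]
    _ ≤ ∑ i with (A * X) r i ≠ 0, hwt (Xᵀ i) := Finset.sum_le_sum fun i hi =>
        minDist_le_hwt (hmem i) (hne i (Finset.mem_filter.mp hi).2)
    _ ≤ ∑ i, hwt (Xᵀ i) := Finset.sum_le_sum_of_subset (Finset.filter_subset _ _)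

/-- Minimum-distance bound for the dual of a matrix-product code:
`d(C^⊥) ≥ min_i { d_i^⊥ · d(U_{(A⁻¹)ᵀ}(i)) }`. -/
theorem matrixProduct_dual_dist
    {F : Type*} [Field F] {n l : ℕ} (hl : 0 < l)
    (C : Fin l → Submodule F (Fin n → F)) (d' : Fin l → ℕ)
    (hd : ∀ u, minHWt (euclDual (C u)) (d' u))
    (A : Matrix (Fin l) (Fin l) F) (hA : IsUnit A) :
    ∀ c ∈ euclDual (matrixProductCode C A), c ≠ 0 →
      Finset.univ.inf' ⟨⟨0, hl⟩, Finset.mem_univ _⟩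
        (fun u : Fin l => d' u * minDist (UA (A⁻¹)ᵀ ((u : ℕ) + 1))) ≤ hwt c := by
  intro x hx hx0
  set X := Matrix.of (Function.curry x)
  have hAX : A * X ≠ 0 := by
    intro h
    have hX : X = 0 := by
      rw [← nonsing_inv_mul_cancel_left A X ((isUnit_iff_isUnit_det A).mp hA), h, Matrix.mul_zero]
    exact hx0 (funext fun p => congrFun (congrFun hX p.1) p.2)
  obtain ⟨r, hr, hlast⟩ := exists_ne_zero_forall_gt_eq_zero hAX
  calc _ ≤ d' r * minDist (UA (A⁻¹)ᵀ ((r : ℕ) + 1)) := Finset.inf'_le _ (Finset.mem_univ r)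
    _ ≤ hwt ((A * X) r) * minDist (UA (A⁻¹)ᵀ ((r : ℕ) + 1)) := Nat.mul_le_mul_right _ <|
        (hd r).2 _ (mul_row_mem_euclDual_of_mem_euclDual_matrixProductCode hx r) hr
    _ ≤ ∑ i, hwt (Xᵀ i) := hwt_row_mul_minDist_le_sum_hwt_col hA X hlast
    _ = hwt x := (hwt_eq_sum_hwt_col x).symm

end
end

section
/- Let q = p^m with p prime and let 0 ≤ s < m. Let C_1,…,C_l ⊆ F_q^n be linear codes over F_q and let A be a nonsingular l×l matrix over F_q such that A·(A^{(p^{m-s})})^T = diag(λ_1,…,λ_l) with λ_1,…,λ_l all nonzero elements of F_q. Then the s-Galois dual of the matrix-product code satisfies ([C_1,…,C_l]A)^{⊥_s} = [C_1^{⊥_s},…,C_l^{⊥_s}]A. -/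
open Finset Matrix

noncomputable section

/-!
Write `σ` for the Frobenius power `x ↦ x ^ p ^ s`. Applying `σ` entrywise to
`A · (A^{(p^{m-s})})ᵀ = diag λ` and using `x ^ p ^ m = x` gives `A · (A^σ)ᵀ = diag (σ ∘ λ)`:
the rows of `A` are pairwise orthogonal for the `s`-Galois form. Expanding the form on two
matrix-product words `[c_1,…,c_l] A` and `[d_1,…,d_l] A` then gives `Σ_u σ(λ_u) [c_u, d_u]_s`,
so, testing with words supported on a single `u`, `[d_1,…,d_l] A` is orthogonal to
`[C_1,…,C_l] A` exactly when every `d_u` lies in `C_u^{⊥_s}`. As `A` is invertible, every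
vector is such a word.
-/

section MatrixProductVec

variable {R : Type*} [CommSemiring R] {ι κ ν : Type*} [Fintype ι]

def matrixProductVec (A : Matrix ι κ R) (c : ι → ν → R) : κ × ν → R :=
  fun z => ∑ u, A u z.1 * c u z.2

theorem matrixProductVec_matrixProductVec {ι' : Type*} [Fintype ι'] (B : Matrix ι' ι R)
    (A : Matrix ι κ R) (c : ι' → ν → R) :
    matrixProductVec A (fun u i => matrixProductVec B c (u, i)) = matrixProductVec (B * A) c := by
  ext ⟨j, i⟩
  simp only [matrixProductVec, Matrix.mul_apply, Finset.mul_sum, Finset.sum_mul]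
  rw [Finset.sum_comm]
  exact Finset.sum_congr rfl fun _ _ => Finset.sum_congr rfl fun _ _ => by ring

theorem matrixProductVec_one [DecidableEq ι] (c : ι → ν → R) :
    matrixProductVec (1 : Matrix ι ι R) c = fun z => c z.1 z.2 := by
  ext ⟨j, i⟩
  simp [matrixProductVec, Matrix.one_apply]

variable [Fintype κ] [Fintype ν]

theorem sum_matrixProductVec_mul_map (σ : R →+* R) (A : Matrix ι κ R) (c d : ι → ν → R) :
    ∑ z, matrixProductVec A c z * σ (matrixProductVec A d z) =
      ∑ u, ∑ v, (A * (A.map σ)ᵀ) u v * ∑ i, c u i * σ (d v i) := calc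
  _ = ∑ z : κ × ν, ∑ u, ∑ v, A u z.1 * c u z.2 * σ (A v z.1 * d v z.2) := by
    simp only [matrixProductVec, map_sum, Finset.sum_mul_sum]
  _ = ∑ u, ∑ v, ∑ z : κ × ν, A u z.1 * σ (A v z.1) * (c u z.2 * σ (d v z.2)) := by
    rw [Finset.sum_comm]
    refine Finset.sum_congr rfl fun u _ => ?_
    rw [Finset.sum_comm]
    simp only [map_mul, mul_mul_mul_comm]
  _ = _ := by
    simp only [Matrix.mul_apply, Matrix.transpose_apply, Matrix.map_apply, Finset.sum_mul_sum,
      Fintype.sum_prod_type]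

theorem sum_matrixProductVec_mul_map_of_diagonal [DecidableEq ι] {σ : R →+* R}
    {A : Matrix ι κ R} {μ : ι → R} (hA : A * (A.map σ)ᵀ = Matrix.diagonal μ)
    (c d : ι → ν → R) :
    ∑ z, matrixProductVec A c z * σ (matrixProductVec A d z) =
      ∑ u, μ u * ∑ i, c u i * σ (d u i) := by
  rw [sum_matrixProductVec_mul_map, hA]
  simp [Matrix.diagonal_apply]

end MatrixProductVec

theorem matrixProductVec_surjective {R : Type*} [CommRing R] {ι ν : Type*} [Fintype ι]
    [DecidableEq ι] {A : Matrix ι ι R} (hA : IsUnit A) :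
    Function.Surjective (matrixProductVec (ν := ν) A) := fun x =>
  ⟨fun u i => matrixProductVec A⁻¹ (fun j i => x (j, i)) (u, i), by
    rw [matrixProductVec_matrixProductVec, Matrix.nonsing_inv_mul _
      ((Matrix.isUnit_iff_isUnit_det A).mp hA), matrixProductVec_one]⟩

theorem mul_transpose_map_iterateFrobenius_eq_diagonal {R : Type*} [CommRing R] {p m s : ℕ}
    [ExpChar R p] (hs : s ≤ m) (hfrob : ∀ x : R, x ^ p ^ m = x) {ι κ : Type*} [Fintype κ]
    [DecidableEq ι] {A : Matrix ι κ R} {lam : ι → R}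
    (hdiag : A * (A.map fun x => x ^ p ^ (m - s))ᵀ = Matrix.diagonal lam) :
    A * (A.map (iterateFrobenius R p s))ᵀ = Matrix.diagonal fun u => lam u ^ p ^ s := by
  have hid : (iterateFrobenius R p s ∘ fun x => x ^ p ^ (m - s)) = id := funext fun x => by
    rw [Function.comp_apply, iterateFrobenius_def, ← pow_mul, ← pow_add, Nat.sub_add_cancel hs,
      hfrob, id]
  have h := congrArg (fun M => (M.map (iterateFrobenius R p s))ᵀ) hdiag
  simpa only [Matrix.map_mul, Matrix.transpose_map, Matrix.map_map, hid, Matrix.map_id,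
    Matrix.diagonal_map (map_zero _), Matrix.transpose_mul, Matrix.transpose_transpose,
    Matrix.diagonal_transpose, iterateFrobenius_def] using h

theorem mem_matrixProductCode_iff {F : Type*} [Field F] {n l t : ℕ}
    {C : Fin l → Submodule F (Fin n → F)} {A : Matrix (Fin l) (Fin t) F}
    {x : Fin t × Fin n → F} :
    x ∈ matrixProductCode C A ↔ ∃ c, (∀ u, c u ∈ C u) ∧ x = matrixProductVec A c := by
  refine exists_congr fun c => and_congr_right fun _ => ?_
  simp only [funext_iff, Prod.forall, matrixProductVec]

/-- If `A · (A^{(p^{m-s})})ᵀ = diag(λ_1,…,λ_l)` with all `λ_i ≠ 0`, then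
`([C_1,…,C_l]A)^{⊥_s} = [C_1^{⊥_s},…,C_l^{⊥_s}]A`. -/
theorem matrixProduct_galois_dual
    {p m s : ℕ} [Fact p.Prime] (hs : s < m)
    {F : Type*} [Field F] [Fintype F] [CharP F p] (hcard : Fintype.card F = p ^ m)
    {n l : ℕ} (C : Fin l → Submodule F (Fin n → F))
    (A : Matrix (Fin l) (Fin l) F) (hA : IsUnit A)
    (lam : Fin l → F) (hlam : ∀ u, lam u ≠ 0)
    (hdiag : A * (A.map fun x => x ^ p ^ (m - s))ᵀ = Matrix.diagonal lam) :
    sGaloisDual p s (matrixProductCode C A) =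
      matrixProductCode (fun u => sGaloisDual p s (C u)) A := by
  have horth := mul_transpose_map_iterateFrobenius_eq_diagonal hs.le
    (fun x => hcard ▸ FiniteField.pow_card x) hdiag
  have pairing := sum_matrixProductVec_mul_map_of_diagonal (ν := Fin n) horth
  simp only [iterateFrobenius_def] at pairing
  ext x
  rw [mem_matrixProductCode_iff]
  constructor
  · intro hx
    obtain ⟨d, rfl⟩ := matrixProductVec_surjective hA x
    refine ⟨d, fun u c hc => ?_, rfl⟩
    have hsingle : ∀ w, (Pi.single u c : Fin l → Fin n → F) w ∈ C w := fun w => by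
      obtain rfl | hw := eq_or_ne w u
      · simpa using hc
      · simp [hw]
    have hy := hx _ (mem_matrixProductCode_iff.2 ⟨Pi.single u c, hsingle, rfl⟩)
    rw [pairing, Fintype.sum_eq_single u fun w hw => by simp [hw]] at hy
    simpa [hlam u] using hy
  · rintro ⟨d, hd, rfl⟩ y hy
    obtain ⟨c, hc, rfl⟩ := mem_matrixProductCode_iff.1 hy
    rw [pairing]
    exact Finset.sum_eq_zero fun u _ => by rw [hd u _ (hc u), mul_zero]

end
end

section
/- Let q be a prime power, m ≥ 1, and let g = (g_1,…,g_m) be a self-dual basis of F_{q^m} over F_q. Let G_k(g) be the Gabidulin code of length m and dimension k (1 ≤ k ≤ m−1), and for 0 ≤ s ≤ m−1 let Hull_s(G_k(g)) = G_k(g) ∩ G_k(g)^{⊥_s}, where the s-Galois dual is taken with respect to the form [x,y]_s = Σ_{i=1}^m x_i y_i^{q^s} on F_{q^m}^m. Then dim_{F_{q^m}} Hull_s(G_k(g)) = min{m−k, s} if 0 ≤ s ≤ k, and dim_{F_{q^m}} Hull_s(G_k(g)) = min{m−s, k} if k+1 ≤ s ≤ m−1. -/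
open Finset Matrix

noncomputable section

/-! Let `M` be the Moore matrix of the basis, `M t j = b j ^ q ^ t`. Self-duality says exactly
`Mᵀ * M = 1`, so the rows `r t` of `M` are orthonormal for the dot product, and a vector lies in
the span of the rows indexed by `S` iff it is orthogonal to every other row. The Gabidulin code
`G_k` is spanned by the rows `r t`, `t < k`, and the Frobenius `x ↦ x ^ q ^ s` carries `r t` to
`r (t + s)` (indices mod `m`), so `[r (t + s), x]_s = (r t ⬝ᵥ x) ^ q ^ s`: the `s`-Galois dual of
`G_k` is spanned by the rows with `k ≤ t + s mod m`. Hence the hull is spanned by the rows with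
`t < k ≤ t + s mod m`, and these are the `t` in `[k - s, min k (m - s))`. -/

section OrthogonalRows

variable {K ι : Type*} [Field K] [Fintype ι] [DecidableEq ι] {M : Matrix ι ι K}

theorem mem_span_rows_iff (hM : M * Mᵀ = 1) (S : Set ι) (x : ι → K) :
    x ∈ Submodule.span K (M.row '' S) ↔ ∀ t ∉ S, M t ⬝ᵥ x = 0 := by
  have hdot : ∀ t u, M t ⬝ᵥ M u = if t = u then 1 else 0 := fun t u => by
    simpa [Matrix.mul_apply, dotProduct, Matrix.one_apply] using congrFun (congrFun hM t) u
  constructor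
  · intro hx t ht
    induction hx using Submodule.span_induction with
    | mem _ hy =>
      obtain ⟨u, hu, rfl⟩ := hy
      simp [Matrix.row, hdot, show t ≠ u from fun h => ht (h ▸ hu)]
    | zero => exact dotProduct_zero _
    | add _ _ _ _ hy hz => rw [dotProduct_add, hy, hz, add_zero]
    | smul c _ _ hy => rw [dotProduct_smul, hy, smul_zero]
  · intro h
    have hx : x = ∑ t, (M t ⬝ᵥ x) • M t := by
      calc x = (M *ᵥ x) ᵥ* M := by
            rw [← vecMul_transpose, vecMul_vecMul, mul_eq_one_comm.mp hM, vecMul_one]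
        _ = ∑ t, (M t ⬝ᵥ x) • M t := vecMul_eq_sum _ _
    rw [hx]
    refine Submodule.sum_mem _ fun t _ => ?_
    by_cases ht : t ∈ S
    · exact Submodule.smul_mem _ _ (Submodule.subset_span ⟨t, ht, rfl⟩)
    · simp [h t ht]

theorem span_rows_inf_span_rows (hM : M * Mᵀ = 1) (S T : Set ι) :
    Submodule.span K (M.row '' S) ⊓ Submodule.span K (M.row '' T) =
      Submodule.span K (M.row '' (S ∩ T)) := by
  ext x
  simp only [Submodule.mem_inf, mem_span_rows_iff hM, Set.mem_inter_iff, not_and_or, or_imp,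
    forall_and]

theorem finrank_span_rows (hM : M * Mᵀ = 1) (S : Set ι) :
    Module.finrank K (Submodule.span K (M.row '' S)) = S.ncard := by
  classical
  have hrows : LinearIndependent K M.row :=
    linearIndependent_rows_iff_isUnit.2 (IsUnit.of_mul_eq_one _ hM)
  rw [Set.image_eq_range, ← Nat.card_coe_set_eq, Nat.card_eq_fintype_card]
  exact finrank_span_eq_card (hrows.comp _ Subtype.val_injective)

end OrthogonalRows

theorem mem_sGaloisDual_span_iff {F ι : Type*} [Field F] [Fintype ι] {p : ℕ} [Fact p.Prime]
    [CharP F p] (e : ℕ) (G : Set (ι → F)) (x : ι → F) :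
    x ∈ sGaloisDual p e (Submodule.span F G) ↔ ∀ c ∈ G, ∑ i, c i * x i ^ p ^ e = 0 := by
  refine ⟨fun hx c hc => hx c (Submodule.subset_span hc), fun h c hc => ?_⟩
  induction hc using Submodule.span_induction with
  | mem c hc => exact h c hc
  | zero => simp
  | add c d _ _ hc hd => simp [add_mul, Finset.sum_add_distrib, hc, hd]
  | smul r c _ hc => simp [mul_assoc, ← Finset.mul_sum, hc]

theorem pow_pow_eq_pow_pow_mod {K : Type*} [Field K] [Fintype K] {q m : ℕ}
    (hK : Fintype.card K = q ^ m) (x : K) (n : ℕ) : x ^ q ^ n = x ^ q ^ (n % m) := by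
  calc x ^ q ^ n = (x ^ (q ^ m) ^ (n / m)) ^ q ^ (n % m) := by
        rw [← pow_mul, ← pow_mul, ← pow_add, Nat.div_add_mod]
    _ = x ^ q ^ (n % m) := by rw [← hK, FiniteField.pow_card_pow]

def mooreMatrix {K : Type*} [Field K] (q : ℕ) {m : ℕ} (g : Fin m → K) :
    Matrix (Fin m) (Fin m) K :=
  Matrix.of fun t j => g j ^ q ^ (t : ℕ)

section MooreMatrix

variable {K : Type*} [Field K] {q m : ℕ}

theorem gabidulin_eq_span_mooreMatrix_rows {k : ℕ} (hk : k ≤ m) (g : Fin m → K) :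
    gabidulin q k g = Submodule.span K ((mooreMatrix q g).row '' {t | (t : ℕ) < k}) := by
  rw [gabidulin, Set.image]
  congr 1
  ext x
  constructor
  · rintro ⟨i, rfl⟩
    exact ⟨⟨i, by omega⟩, i.isLt, rfl⟩
  · rintro ⟨t, ht, rfl⟩
    exact ⟨⟨t, ht⟩, rfl⟩

theorem mooreMatrix_apply_pow [Fintype K] (hK : Fintype.card K = q ^ m) (g : Fin m → K)
    (t s j : Fin m) : mooreMatrix q g t j ^ q ^ (s : ℕ) = mooreMatrix q g (t + s) j := by
  simp only [mooreMatrix, Matrix.of_apply, ← pow_mul, ← pow_add, Fin.val_add]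
  exact pow_pow_eq_pow_pow_mod hK _ _

theorem sGaloisDual_span_mooreMatrix_rows [Fintype K] {p a : ℕ} [Fact p.Prime] [CharP K p]
    (hK : Fintype.card K = q ^ m) (hq : q = p ^ a) {g : Fin m → K}
    (hM : mooreMatrix q g * (mooreMatrix q g)ᵀ = 1) (s : Fin m) (S : Set (Fin m)) :
    sGaloisDual p (a * s) (Submodule.span K ((mooreMatrix q g).row '' S)) =
      Submodule.span K ((mooreMatrix q g).row '' ((· + s) ⁻¹' Sᶜ)) := by
  have : NeZero m := NeZero.of_pos s.pos
  set φ := iterateFrobenius K p (a * s)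
  have hφ : ∀ y, φ y = y ^ q ^ (s : ℕ) := fun y => by rw [iterateFrobenius_def, hq, pow_mul]
  have hfrob : ∀ (t : Fin m) (x : Fin m → K),
      (mooreMatrix q g (t + s) ⬝ᵥ fun j => x j ^ p ^ (a * s)) = φ (mooreMatrix q g t ⬝ᵥ x) := by
    intro t x
    rw [RingHom.map_dotProduct]
    congr 1
    funext j
    simp [hφ, mooreMatrix_apply_pow hK]
  have hzero : ∀ t x, (mooreMatrix q g (t + s) ⬝ᵥ fun j => x j ^ p ^ (a * s)) = 0 ↔
      mooreMatrix q g t ⬝ᵥ x = 0 := fun t x => by rw [hfrob, map_eq_zero]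
  ext x
  rw [mem_sGaloisDual_span_iff, mem_span_rows_iff hM, Set.forall_mem_image]
  constructor
  · intro h t ht
    exact (hzero t x).1 (h (not_not.1 ht))
  · intro h u hu
    have hdot := (hzero (u - s) x).2 (h (u - s) (by simpa using hu))
    rwa [sub_add_cancel] at hdot

end MooreMatrix

theorem mooreMatrix_mul_transpose_eq_one {Fq K : Type*} [Field Fq] [Fintype Fq] [Field K]
    [Fintype K] [Algebra Fq K] {m : ℕ} (b : Module.Basis (Fin m) Fq K)
    (hsd : ∀ i j, Algebra.trace Fq K (b i * b j) = if i = j then 1 else 0) :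
    mooreMatrix (Fintype.card Fq) b * (mooreMatrix (Fintype.card Fq) b)ᵀ = 1 := by
  refine mul_eq_one_comm.mp (Matrix.ext fun i j => ?_)
  have htr := FiniteField.algebraMap_trace_eq_sum_pow Fq K (b i * b j)
  rw [hsd, Module.finrank_eq_card_basis b, Fintype.card_fin, Nat.card_eq_fintype_card,
    ← Fin.sum_univ_eq_sum_range] at htr
  simp only [Matrix.mul_apply, transpose_apply, mooreMatrix, of_apply, ← mul_pow, ← htr,
    one_apply]
  split_ifs <;> simp

theorem ncard_lt_inter_preimage_add_not_lt {m : ℕ} (k : ℕ) (s : Fin m) :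
    ({t : Fin m | (t : ℕ) < k} ∩ (· + s) ⁻¹' {t | (t : ℕ) < k}ᶜ).ncard =
      min k (m - s) - (k - s) := by
  rw [← Set.ncard_image_of_injective _ Fin.val_injective, ← Set.ncard_Ico_nat]
  congr 1
  ext n
  simp only [Set.mem_image, Set.mem_inter_iff, Set.mem_preimage, Set.mem_compl_iff,
    Set.mem_ofPred_eq, not_lt, Fin.val_add, Set.mem_Ico, lt_min_iff]
  constructor
  · rintro ⟨t, ⟨htk, hkts⟩, rfl⟩
    have := t.isLt
    have := s.isLt
    rcases lt_or_ge ((t : ℕ) + s) m with hts | hts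
    · rw [Nat.mod_eq_of_lt hts] at hkts
      omega
    · rw [Nat.mod_eq_sub_mod hts, Nat.mod_eq_of_lt (by omega)] at hkts
      omega
  · rintro ⟨h1, h2, h3⟩
    refine ⟨⟨n, by omega⟩, ⟨h2, ?_⟩, rfl⟩
    show k ≤ (n + s) % m
    rw [Nat.mod_eq_of_lt (by omega)]
    omega

theorem gabidulin_galois_hull_dim_general
    {p a : ℕ} [Fact p.Prime]
    {Fq K : Type*} [Field Fq] [Fintype Fq] [Field K] [Fintype K] [Algebra Fq K] [CharP K p]
    (hq : Fintype.card Fq = p ^ a)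
    {m : ℕ} (b : Module.Basis (Fin m) Fq K)
    (hsd : ∀ i j, Algebra.trace Fq K (b i * b j) = if i = j then 1 else 0)
    {k s : ℕ} (hk2 : k ≤ m - 1) (hs : s ≤ m - 1) :
    (s ≤ k →
      Module.finrank K
          (sGaloisHull p (a * s) (gabidulin (Fintype.card Fq) k (fun j => b j))) =
        min (m - k) s) ∧
    (k + 1 ≤ s →
      Module.finrank K
          (sGaloisHull p (a * s) (gabidulin (Fintype.card Fq) k (fun j => b j))) =
        min (m - s) k) := by
  have hK : Fintype.card K = Fintype.card Fq ^ m := by simpa using Module.card_fintype b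
  have hm : 0 < m := Fin.pos_iff_nonempty.2 b.index_nonempty
  have hM := mooreMatrix_mul_transpose_eq_one b hsd
  have hdim : Module.finrank K
      (sGaloisHull p (a * s) (gabidulin (Fintype.card Fq) k (fun j => b j))) =
        min k (m - s) - (k - s) := by
    obtain ⟨s', rfl⟩ : ∃ s' : Fin m, (s' : ℕ) = s := ⟨⟨s, by omega⟩, rfl⟩
    rw [sGaloisHull, gabidulin_eq_span_mooreMatrix_rows (by omega),
      sGaloisDual_span_mooreMatrix_rows hK hq hM, span_rows_inf_span_rows hM,
      finrank_span_rows hM, ncard_lt_inter_preimage_add_not_lt]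
  constructor <;> intro <;> omega

/-- (Hull dimension of Gabidulin codes, for a self-dual basis `g` of
`F_{q^m}` over `F_q` with `q = p^a` a prime power.)  The `s`-Galois form here is
`[x,y]_s = ∑ i, x i * y i ^ (q ^ s)`; since `q ^ s = p ^ (a*s)`, it is `sGaloisDual p (a*s)`.
Then `dim Hull_s(G_k(g)) = min (m-k) s` for `0 ≤ s ≤ k`, and `= min (m-s) k` for
`k+1 ≤ s ≤ m-1`. -/
theorem gabidulin_galois_hull_dim
    {p a : ℕ} [Fact p.Prime] (ha : 0 < a)
    {Fq K : Type*} [Field Fq] [Fintype Fq] [Field K] [Fintype K] [Algebra Fq K] [CharP K p]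
    (hq : Fintype.card Fq = p ^ a)
    {m : ℕ} (hrank : Module.finrank Fq K = m) (b : Module.Basis (Fin m) Fq K)
    (hsd : ∀ i j, Algebra.trace Fq K (b i * b j) = if i = j then 1 else 0)
    {k s : ℕ} (hk1 : 1 ≤ k) (hk2 : k ≤ m - 1) (hs : s ≤ m - 1) :
    (s ≤ k →
      Module.finrank K
          (sGaloisHull p (a * s) (gabidulin (Fintype.card Fq) k (fun j => b j))) =
        min (m - k) s) ∧
    (k + 1 ≤ s →
      Module.finrank K
          (sGaloisHull p (a * s) (gabidulin (Fintype.card Fq) k (fun j => b j))) =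
        min (m - s) k) :=
  gabidulin_galois_hull_dim_general hq b hsd hk2 hs

end
end
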